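/- The subgroup Γ₀(2) of SL₂(ℤ) consisting of matrices [[a,b],[c,d]] with c ≡ 0 (mod 2) is generated by T = [[1,1],[0,1]] and S T² S T, where S = [[0,-1],[1,0]]. -/

import Mathlib

/-!
Put `U = S T² S T = [[-1, -1], [2, 1]]`. Then `U² = -1` and `S T² S⁻¹ = [[1, 0], [-2, 1]] = U³ T⁻¹`,
so it suffices that `T`, `S T² S⁻¹` and `-1` generate `Γ₀(2)`. This is a Euclidean descent on `|c|`
for `g = [[a, b], [c, d]] ∈ Γ₀(2)`: if `c = 0` then `g = ±Tⁿ`. Otherwise a power of `T` replaces `a`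
by some `a'` with `2|a'| ≤ |c|`, and `a'` is odd (as `ad - bc = 1` with `c` even), hence nonzero;
then a power of `S T² S⁻¹` replaces `c` by some `c'` with `|c'| ≤ |a'| < |c|`.
-/

open ModularGroup CongruenceSubgroup Matrix.SpecialLinearGroup
open scoped MatrixGroups

theorem Int.exists_two_mul_natAbs_add_mul_le (a : ℤ) {c : ℤ} (hc : c ≠ 0) :
    ∃ n : ℤ, 2 * (a + n * c).natAbs ≤ c.natAbs := by
  refine ⟨-(a.bdiv c.natAbs * c.sign), ?_⟩
  have hbmod : a + -(a.bdiv c.natAbs * c.sign) * c = a.bmod c.natAbs := by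
    have := a.bmod_add_bdiv' c.natAbs
    rw [← Int.mul_sign_self] at this
    linear_combination -this
  have hpos : 0 < c.natAbs := Int.natAbs_pos.2 hc
  have := Int.le_bmod (x := a) hpos
  have := Int.bmod_le (x := a) hpos
  omega

namespace ModularGroup

theorem coe_S_mul_T_zpow_mul_S_inv (k : ℤ) : ↑(S * T ^ k * S⁻¹) = !![1, 0; -k, 1] := by
  simp [S_inv, coe_T_zpow]

theorem T_zpow_mul_apply_zero_zero (n : ℤ) (g : SL(2, ℤ)) :
    (T ^ n * g) 0 0 = g 0 0 + n * g 1 0 := by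
  simp [coe_T_zpow, Matrix.mul_apply, Fin.sum_univ_two]

theorem S_mul_T_zpow_mul_S_inv_mul_apply_one_zero (k : ℤ) (g : SL(2, ℤ)) :
    (S * T ^ k * S⁻¹ * g) 1 0 = g 1 0 - k * g 0 0 := by
  rw [coe_mul, coe_S_mul_T_zpow_mul_S_inv]
  simp [Matrix.mul_apply, Fin.sum_univ_two, sub_eq_neg_add]

theorem eq_T_zpow_or_neg_of_c_eq_zero {g : SL(2, ℤ)} (hc : g 1 0 = 0) :
    g = T ^ g 0 1 ∨ g = -T ^ (-g 0 1) := by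
  have had : g 0 0 * g 1 1 = 1 := by
    have := g.det_coe
    rw [Matrix.det_fin_two, hc] at this
    lia
  rcases Int.eq_one_or_neg_one_of_mul_eq_one' had with ⟨ha, hd⟩ | ⟨ha, hd⟩
  · left
    ext i j; fin_cases i <;> fin_cases j <;> simp [ha, hc, hd, coe_T_zpow]
  · right
    ext i j; fin_cases i <;> fin_cases j <;> simp [ha, hc, hd, coe_T_zpow]

end ModularGroup

namespace CongruenceSubgroup

theorem mem_Gamma0_two_iff {g : SL(2, ℤ)} : g ∈ Gamma0 2 ↔ Even (g 1 0) := by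
  rw [Gamma0_mem, ZMod.intCast_eq_zero_iff_even]

theorem odd_of_mem_Gamma0_two {g : SL(2, ℤ)} (hg : g ∈ Gamma0 2) : Odd (g 0 0) := by
  have hdet : g 0 0 * g 1 1 = g 0 1 * g 1 0 + 1 := by
    have := g.det_coe
    rw [Matrix.det_fin_two] at this
    lia
  have hodd : Odd (g 0 0 * g 1 1) := hdet ▸ ((mem_Gamma0_two_iff.1 hg).mul_left _).add_one
  exact (Int.odd_mul.1 hodd).1

theorem exists_natAbs_lt_of_mem_Gamma0_two {g : SL(2, ℤ)} (hg : g ∈ Gamma0 2)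
    (hc : g 1 0 ≠ 0) :
    ∃ m n : ℤ, ((S * T ^ (2 * m) * S⁻¹ * T ^ n * g) 1 0).natAbs < (g 1 0).natAbs := by
  obtain ⟨n, hn⟩ := Int.exists_two_mul_natAbs_add_mul_le (g 0 0) hc
  have ha' : g 0 0 + n * g 1 0 ≠ 0 := by
    have hodd := (odd_of_mem_Gamma0_two hg).add_even ((mem_Gamma0_two_iff.1 hg).mul_left n)
    rintro h
    simp [h] at hodd
  obtain ⟨m, hm⟩ :=
    Int.exists_two_mul_natAbs_add_mul_le (g 1 0) (mul_ne_zero two_ne_zero ha')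
  refine ⟨-m, n, ?_⟩
  have hentry : (S * T ^ (2 * -m) * S⁻¹ * T ^ n * g) 1 0 =
      g 1 0 + m * (2 * (g 0 0 + n * g 1 0)) := by
    rw [mul_assoc, S_mul_T_zpow_mul_S_inv_mul_apply_one_zero, T_pow_mul_apply_one,
      T_zpow_mul_apply_zero_zero]
    ring
  rw [hentry]
  omega

theorem Gamma0_two_le_of_mem {H : Subgroup SL(2, ℤ)} (hT : T ∈ H) (hL : S * T ^ 2 * S⁻¹ ∈ H)
    (hneg : -1 ∈ H) : Gamma0 2 ≤ H := by
  intro g hg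
  induction hc : (g 1 0).natAbs using Nat.strong_induction_on generalizing g with
  | _ k ih =>
  by_cases hc0 : g 1 0 = 0
  · rcases eq_T_zpow_or_neg_of_c_eq_zero hc0 with hg' | hg'
    · exact hg' ▸ zpow_mem hT _
    · rw [hg', ← neg_one_mul]
      exact mul_mem hneg (zpow_mem hT _)
  obtain ⟨m, n, hlt⟩ := exists_natAbs_lt_of_mem_Gamma0_two hg hc0
  have hγ : ∀ K : Subgroup SL(2, ℤ), T ∈ K → S * T ^ 2 * S⁻¹ ∈ K →
      S * T ^ (2 * m) * S⁻¹ * T ^ n ∈ K := fun K hTK hLK ↦ by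
    rw [_root_.zpow_mul, ← conj_zpow]
    exact mul_mem (zpow_mem hLK m) (zpow_mem hTK n)
  have hmem := ih _ (hc ▸ hlt) (mul_mem (hγ _ (Gamma0_mem.2 (by decide))
    (Gamma0_mem.2 (by decide))) hg) rfl
  simpa only [inv_mul_cancel_left] using mul_mem (inv_mem (hγ H hT hL)) hmem

end CongruenceSubgroup

/-- `Γ₀(2) = {[[a,b],[c,d]] ∈ SL₂(ℤ) : c ≡ 0 mod 2}` is generated by
`T = [[1,1],[0,1]]` and `S T² S T`, where `S = [[0,-1],[1,0]]`. -/
theorem Gamma0_two_generators :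
    Subgroup.closure ({ModularGroup.T, ModularGroup.S * ModularGroup.T ^ 2 *
        ModularGroup.S * ModularGroup.T} : Set (Matrix.SpecialLinearGroup (Fin 2) ℤ)) =
      CongruenceSubgroup.Gamma0 2 := by
  set U := S * T ^ 2 * S * T
  have hT : T ∈ Subgroup.closure {T, U} := Subgroup.subset_closure (by simp)
  have hU : U ∈ Subgroup.closure {T, U} := Subgroup.subset_closure (by simp)
  refine le_antisymm (Subgroup.closure_le _ |>.2 ?_) (Gamma0_two_le_of_mem hT ?_ ?_)
  · simp only [Set.insert_subset_iff, Set.singleton_subset_iff, SetLike.mem_coe, Gamma0_mem]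
    decide
  · have hL : S * T ^ 2 * S⁻¹ = U ^ 3 * T⁻¹ := by decide
    exact hL ▸ mul_mem (pow_mem hU 3) (inv_mem hT)
  · have hneg : (-1 : SL(2, ℤ)) = U ^ 2 := by decide
    exact hneg ▸ pow_mem hU 2
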